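/- Let R be an f-commutative ring that is finitely generated (as a ring). If R is nil, then R is nilpotent; moreover, if β is a generating set of R with n elements and s is the maximal nilpotency index of elements of β, then nd(R) ≤ (s−1)n + 1. -/

import Mathlib

/-- Product `a * l₀ * l₁ * ⋯` of a nonempty list of ring elements. -/
def mulList {R : Type*} [Mul R] (a : R) (l : List R) : R := l.foldl (· * ·) a

/-- `pw a n` is `aⁿ` for `n ≥ 1` (junk value `0` at `n = 0`). -/
def pw {R : Type*} [Mul R] [Zero R] (a : R) : ℕ → R
  | 0 => 0
  | 1 => a
  | n + 2 => pw a (n + 1) * a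

/-- Product of `n` elements given by `f` (junk `0` when `n = 0`). -/
def finProd {R : Type*} [Mul R] [Zero R] : {n : ℕ} → (Fin n → R) → R
  | 0, _ => 0
  | n + 1, f => mulList (f 0) (List.ofFn fun i : Fin n => f i.succ)

/-- `R ^ n = 0`: every product of `n` elements of `R` vanishes. -/
def PowZero (R : Type*) [Mul R] [Zero R] (n : ℕ) : Prop :=
  ∀ (a : R) (l : List R), l.length + 1 = n → mulList a l = 0

/-- `T ^ n = 0` for a subset `T` of a ring. -/
def PowZeroOn {R : Type*} [Mul R] [Zero R] (T : Set R) (n : ℕ) : Prop :=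
  ∀ (a : R) (l : List R), a ∈ T → (∀ x ∈ l, x ∈ T) → l.length + 1 = n → mulList a l = 0

/-- `a` is nilpotent: `aⁿ = 0` for some `n ≥ 1`. -/
def IsNilE {R : Type*} [Mul R] [Zero R] (a : R) : Prop := ∃ n, 1 ≤ n ∧ pw a n = 0

/-- A nil ring: every element is nilpotent. -/
def IsNilRing (R : Type*) [Mul R] [Zero R] : Prop := ∀ a : R, IsNilE a

/-- An `S`-grading of the ring `R`: a direct sum decomposition into additive
subgroups with `R_g R_h ⊆ R_{gh}`. -/
structure IsGrading {S R : Type*} [Monoid S] [NonUnitalRing R] [DecidableEq S]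
    (A : S → AddSubgroup R) : Prop where
  mul_mem : ∀ {g h : S} {x y : R}, x ∈ A g → y ∈ A h → x * y ∈ A (g * h)
  isInternal : DirectSum.IsInternal A

/-- Grading by an additively written monoid. -/
structure IsAddGrading {S R : Type*} [AddMonoid S] [NonUnitalRing R] [DecidableEq S]
    (A : S → AddSubgroup R) : Prop where
  mul_mem : ∀ {g h : S} {x y : R}, x ∈ A g → y ∈ A h → x * y ∈ A (g + h)
  isInternal : DirectSum.IsInternal A

/-- The subset `T` of a ring is `f`-commutative: there are a semigroup `G` acting on it
from the left and a map `f` with `a*b = f(a,b)·(b*a)`. -/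
def IsFCommutativeOn {R : Type*} [Mul R] (T : Set R) : Prop :=
  ∃ (G : Type) (_ : Semigroup G) (act : G → R → R),
    (∀ l m : G, ∀ x : R, x ∈ T → act (l * m) x = act l (act m x)) ∧
    (∀ l : G, ∀ x : R, x ∈ T → act l x ∈ T) ∧
    (∀ l : G, ∀ x y : R, x ∈ T → y ∈ T → act l (x * y) = act l x * y) ∧
    ∃ f : R → R → G, ∀ a b : R, a ∈ T → b ∈ T → a * b = act (f a b) (b * a)

/-- The ring `R` is `f`-commutative. -/
def IsFCommutative (R : Type*) [Mul R] : Prop :=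
  ∃ (G : Type) (_ : Semigroup G) (act : G → R → R),
    (∀ l m : G, ∀ x : R, act (l * m) x = act l (act m x)) ∧
    (∀ l : G, ∀ x y : R, act l (x * y) = act l x * y) ∧
    ∃ f : R → R → G, ∀ a b : R, a * b = act (f a b) (b * a)

/-- The order of `g`: least `n ≥ 1` with `gⁿ = 1`, and `0` if no such `n` exists. -/
noncomputable def ordOf {S : Type*} [Monoid S] (g : S) : ℕ := sInf {n | 1 ≤ n ∧ g ^ n = 1}

/-!
Proof idea: since `R` is generated by `β`, every product of `N` elements of `R` is a
`ℤ`-combination of products of at least `N` generators, so it suffices that those vanish. For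
`N = (s - 1) * #β + 1`, the pigeonhole principle gives a generator `a` occurring at least `s`
times in such a product. The relation `x * y = f(x, y) · (y * x)` lets each occurrence of `a` be
moved to the front of the product (the semigroup action commutes with right multiplication
and fixes `0`), and once `aˢ = 0` has been collected there, the product vanishes.
-/

section MulList

variable {R : Type*}

lemma mulList_nil [Mul R] (a : R) : mulList a [] = a := rfl

lemma mulList_cons [Mul R] (a v : R) (l : List R) :
    mulList a (v :: l) = mulList (a * v) l := rfl

lemma mulList_append [Mul R] (a : R) (l l' : List R) :
    mulList a (l ++ l') = mulList (mulList a l) l' :=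
  List.foldl_append

lemma mulList_concat [Mul R] (a v : R) (l : List R) :
    mulList a (l ++ [v]) = mulList a l * v :=
  mulList_append a l [v]

lemma mul_mulList [Semigroup R] (x y : R) (l : List R) :
    x * mulList y l = mulList (x * y) l := by
  induction l generalizing y with
  | nil => rfl
  | cons v l ih => simp only [mulList_cons, ih, mul_assoc]

lemma zero_mulList [MulZeroClass R] (l : List R) : mulList 0 l = 0 := by
  induction l with
  | nil => rfl
  | cons v l ih => rw [mulList_cons, zero_mul, ih]

end MulList

section Pow

variable {R : Type*} [NonUnitalRing R]

lemma pw_succ (a : R) {j : ℕ} (hj : 1 ≤ j) : pw a (j + 1) = pw a j * a := by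
  obtain ⟨k, rfl⟩ := Nat.exists_eq_add_of_le' hj
  rfl

lemma mul_pw (a : R) {j : ℕ} (hj : 1 ≤ j) : a * pw a j = pw a (j + 1) := by
  induction j, hj using Nat.le_induction with
  | base => rfl
  | succ k hk ih => rw [pw_succ a hk, ← mul_assoc, ih, ← pw_succ a (by omega)]

lemma pw_eq_zero_of_le {a : R} {s j : ℕ} (hs : 1 ≤ s) (ha : pw a s = 0) (hsj : s ≤ j) :
    pw a j = 0 := by
  induction j, hsj using Nat.le_induction with
  | base => exact ha
  | succ k hk ih => rw [pw_succ a (hs.trans hk), ih, zero_mul]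

end Pow

namespace IsFCommutative

variable {R : Type*} [NonUnitalRing R]

lemma mulList_mul_eq_zero (hR : IsFCommutative R) {x y : R} {l : List R}
    (h : mulList (x * y) l = 0) : mulList (y * x) l = 0 := by
  obtain ⟨G, _, act, -, hact, f, hf⟩ := hR
  have act_mulList (g : G) (z : R) (l : List R) : mulList (act g z) l = act g (mulList z l) := by
    induction l generalizing z with
    | nil => rfl
    | cons v l ih => rw [mulList_cons, ← hact, ih, mulList_cons]
  have act_zero (g : G) : act g 0 = 0 := by simpa using hact g 0 0
  rw [hf y x, act_mulList, h, act_zero]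

lemma mulList_pw_mulList_eq_zero [DecidableEq R] (hR : IsFCommutative R) {a : R} {s : ℕ}
    (hs : 1 ≤ s) (ha : pw a s = 0) {l : List R} {j : ℕ} (hj : 1 ≤ j) (hl : s ≤ j + l.count a)
    (w : List R) : mulList (mulList (pw a j) w) l = 0 := by
  induction l generalizing j w with
  | nil => rw [mulList_nil, pw_eq_zero_of_le hs ha (by simpa using hl), zero_mulList]
  | cons v l ih =>
    rw [mulList_cons]
    by_cases hv : v = a
    · subst hv
      apply hR.mulList_mul_eq_zero
      rw [mul_mulList, mul_pw v hj]
      exact ih (by omega) (by rw [List.count_cons_self] at hl; omega) w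
    · rw [← mulList_concat]
      exact ih hj (by rwa [List.count_cons_of_ne hv] at hl) (w ++ [v])

lemma mulList_eq_zero_of_le_count [DecidableEq R] (hR : IsFCommutative R) {a : R} {s : ℕ}
    (hs : 1 ≤ s) (ha : pw a s = 0) {l : List R} (hl : s ≤ l.count a) (y : R) : mulList y l = 0 := by
  induction l generalizing y with
  | nil => simp only [List.count_nil, nonpos_iff_eq_zero] at hl; omega
  | cons v l ih =>
    rw [mulList_cons]
    by_cases hv : v = a
    · subst hv
      apply hR.mulList_mul_eq_zero
      exact hR.mulList_pw_mulList_eq_zero hs ha le_rfl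
        (by rw [List.count_cons_self] at hl; omega) [y]
    · exact ih (by rwa [List.count_cons_of_ne hv] at hl) (y * v)

lemma mulList_eq_zero_of_le_count_cons [DecidableEq R] (hR : IsFCommutative R) {a : R}
    {s : ℕ} (hs : 1 ≤ s) (ha : pw a s = 0) {b : R} {l : List R} (hl : s ≤ (b :: l).count a) :
    mulList b l = 0 := by
  by_cases hb : b = a
  · subst hb
    rw [List.count_cons_self] at hl
    exact hR.mulList_pw_mulList_eq_zero hs ha le_rfl (by omega) []
  · exact hR.mulList_eq_zero_of_le_count hs ha (by rwa [List.count_cons_of_ne hb] at hl) b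

end IsFCommutative

lemma List.exists_le_count_of_mul_card_lt_length {α : Type*} [DecidableEq α] {β : Finset α}
    {l : List α} (hl : ∀ x ∈ l, x ∈ β) {s : ℕ} (hlen : (s - 1) * β.card < l.length) :
    ∃ a ∈ β, s ≤ l.count a := by
  have hsum : ∑ _a ∈ β, (s - 1) < ∑ a ∈ β, (l : Multiset α).count a := by
    rwa [Multiset.sum_count_eq_card hl, Finset.sum_const, smul_eq_mul, Multiset.coe_card,
      mul_comm]
  obtain ⟨a, ha, hlt⟩ := Finset.exists_lt_of_sum_lt hsum
  exact ⟨a, ha, by rw [Multiset.coe_count] at hlt; omega⟩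

section Words

variable {R : Type*} [NonUnitalRing R]

/-- Products of at least `m` elements of `S`. -/
def longWords (S : Set R) (m : ℕ) : Set R :=
  {x | ∃ b w, b ∈ S ∧ (∀ y ∈ w, y ∈ S) ∧ m ≤ w.length + 1 ∧ x = mulList b w}

lemma longWords_anti {S : Set R} {m n : ℕ} (hmn : m ≤ n) : longWords S n ⊆ longWords S m :=
  fun _ ⟨b, w, hb, hw, hn, hx⟩ => ⟨b, w, hb, hw, hmn.trans hn, hx⟩

lemma mul_mem_longWords {S : Set R} {m n : ℕ} {x z : R} (hx : x ∈ longWords S m)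
    (hz : z ∈ longWords S n) : x * z ∈ longWords S (m + n) := by
  obtain ⟨b, w, hb, hw, hm, rfl⟩ := hx
  obtain ⟨b', w', hb', hw', hn, rfl⟩ := hz
  refine ⟨b, w ++ b' :: w', hb, ?_, by rw [List.length_append, List.length_cons]; omega, ?_⟩
  · simp only [List.mem_append, List.mem_cons]
    rintro y (hy | rfl | hy)
    exacts [hw y hy, hb', hw' y hy]
  · rw [mul_mulList, mulList_append, mulList_cons]

lemma mul_mem_closure_longWords {S : Set R} {m n : ℕ} {x z : R}
    (hx : x ∈ AddSubgroup.closure (longWords S m)) (hz : z ∈ AddSubgroup.closure (longWords S n)) :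
    x * z ∈ AddSubgroup.closure (longWords S (m + n)) := by
  induction hx using AddSubgroup.closure_induction with
  | mem u hu =>
    induction hz using AddSubgroup.closure_induction with
    | mem v hv => exact AddSubgroup.subset_closure (mul_mem_longWords hu hv)
    | zero => rw [mul_zero]; exact zero_mem _
    | add v v' _ _ hv hv' => rw [mul_add]; exact add_mem hv hv'
    | neg v _ hv => rw [mul_neg]; exact neg_mem hv
  | zero => rw [zero_mul]; exact zero_mem _
  | add u u' _ _ hu hu' => rw [add_mul]; exact add_mem hu hu'
  | neg u _ hu => rw [neg_mul]; exact neg_mem hu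

lemma mem_closure_longWords_one {S : Set R} (hS : NonUnitalSubring.closure S = ⊤) (x : R) :
    x ∈ AddSubgroup.closure (longWords S 1) := by
  have hx : x ∈ NonUnitalSubring.closure S := hS ▸ NonUnitalSubring.mem_top x
  induction hx using NonUnitalSubring.closure_induction with
  | mem b hb => exact AddSubgroup.subset_closure ⟨b, [], hb, by simp, le_rfl, rfl⟩
  | zero => exact zero_mem _
  | add u v _ _ hu hv => exact add_mem hu hv
  | neg u _ hu => exact neg_mem hu
  | mul u v _ _ hu hv =>
    exact AddSubgroup.closure_mono (longWords_anti (by omega)) (mul_mem_closure_longWords hu hv)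

lemma mulList_mem_closure_longWords {S : Set R} (hS : NonUnitalSubring.closure S = ⊤) {m : ℕ}
    {a : R} (ha : a ∈ AddSubgroup.closure (longWords S m)) (l : List R) :
    mulList a l ∈ AddSubgroup.closure (longWords S (m + l.length)) := by
  induction l generalizing a m with
  | nil => exact ha
  | cons v l ih =>
    rw [mulList_cons, List.length_cons, add_comm l.length, ← add_assoc]
    exact ih (m := m + 1) (mul_mem_closure_longWords ha (mem_closure_longWords_one hS v))

lemma powZero_of_longWords_eq_zero {S : Set R} (hS : NonUnitalSubring.closure S = ⊤) {N : ℕ}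
    (hN : ∀ x ∈ longWords S N, x = 0) : PowZero R N := by
  intro a l hl
  have hmem := mulList_mem_closure_longWords hS (mem_closure_longWords_one hS a) l
  rw [add_comm, hl, AddSubgroup.closure_eq_bot_iff.mpr hN] at hmem
  exact hmem

end Words

theorem stmt_12_general {R : Type*} [NonUnitalRing R] (hfc : IsFCommutative R)
    (β : Finset R) (hgen : NonUnitalSubring.closure (β : Set R) = ⊤)
    (s : ℕ) (hs : 1 ≤ s) (hβ : ∀ a ∈ β, pw a s = 0) :
    (∃ n, 1 ≤ n ∧ PowZero R n) ∧ PowZero R ((s - 1) * β.card + 1) := by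
  classical
  have hN : PowZero R ((s - 1) * β.card + 1) := by
    refine powZero_of_longWords_eq_zero hgen ?_
    rintro _ ⟨b, w, hb, hw, hlen, rfl⟩
    have hbw : ∀ x ∈ b :: w, x ∈ β := by
      simpa only [List.forall_mem_cons] using ⟨hb, hw⟩
    obtain ⟨a, ha, hcount⟩ := List.exists_le_count_of_mul_card_lt_length (s := s) hbw
      (by rw [List.length_cons]; omega)
    exact hfc.mulList_eq_zero_of_le_count_cons hs (hβ a ha) hcount
  exact ⟨⟨_, Nat.succ_pos _, hN⟩, hN⟩

theorem stmt_12 {R : Type*} [NonUnitalRing R] (hfc : IsFCommutative R)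
    (hnil : IsNilRing R)
    (β : Finset R) (hgen : NonUnitalSubring.closure (β : Set R) = ⊤)
    (s : ℕ) (hs : 1 ≤ s) (hβ : ∀ a ∈ β, pw a s = 0) :
    (∃ n, 1 ≤ n ∧ PowZero R n) ∧ PowZero R ((s - 1) * β.card + 1) :=
  stmt_12_general hfc β hgen s hs hβ
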